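/- The (a;q)-binomial coefficient [n choose k]_{a;q} = [(q^{1+k}, aq^{1+k}; q)_{n-k} / (q, aq; q)_{n-k}]·q^{k(k-n)} is symmetric: [n choose k]_{a;q} = [n choose n-k]_{a;q} for 0 ≤ k ≤ n, and it satisfies the two recurrences [n+1 choose k]_{a;q} = [n choose k]_{a;q} + [(1-aq^{2n+2-k})/(1-aq^k)]·q^{k-n-1}·[n choose k-1]_{a;q} and [n+1 choose k]_{a;q} = [(1-aq^{n+1+k})/(1-aq^{n+1-k})]·q^{-k}·[n choose k]_{a;q} + [n choose k-1]_{a;q}. -/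
import Mathlib

/-- The `q`-shifted factorial `(a;q)_n = ∏_{j=0}^{n-1} (1 - a q^j)`. -/
def qPoch {K : Type*} [Field K] (a q : K) (n : ℕ) : K :=
  ∏ j ∈ Finset.range n, (1 - a * q ^ j)

/-- The `(a;q)`-binomial coefficient
`[n,k]_{a;q} = [(q^{1+k}, aq^{1+k};q)_{n-k}/(q, aq;q)_{n-k}]·q^{k(k-n)}` for `0 ≤ k ≤ n`,
and `0` for `k < 0` or `k > n`. -/
def aqBinom {K : Type*} [Field K] (a q : K) (n : ℕ) (k : ℤ) : K :=
  if k < 0 ∨ (n : ℤ) < k then 0 else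
    qPoch (q ^ (k + 1)) q (n - k.toNat) * qPoch (a * q ^ (k + 1)) q (n - k.toNat) /
      (qPoch q q (n - k.toNat) * qPoch (a * q) q (n - k.toNat)) * q ^ (k * (k - (n : ℤ)))

namespace AqBinomAux

variable {K : Type*} [Field K]

lemma qPoch_succ (a q : K) (n : ℕ) : qPoch a q (n+1) = qPoch a q n * (1 - a * q ^ n) :=
  Finset.prod_range_succ _ _

lemma qPoch_add (x q : K) (j m : ℕ) :
    qPoch x q (j + m) = qPoch x q j * qPoch (x * q ^ j) q m := by
  unfold qPoch
  rw [Finset.prod_range_add]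
  exact congrArg _ (Finset.prod_congr rfl fun i _ => by ring)

lemma qPoch_q_ne {q : K} (hq1 : ∀ m : ℕ, q ^ (m + 1) ≠ 1) (m : ℕ) : qPoch q q m ≠ 0 := by
  refine Finset.prod_ne_zero_iff.mpr fun i _ => ?_
  have h : q * q ^ i = q ^ (i + 1) := by ring
  rw [h]
  intro h2
  exact hq1 i (by linear_combination -h2)

lemma qPoch_aq_ne {a q : K} (haq : ∀ m : ℤ, 1 - a * q ^ m ≠ 0) (m : ℕ) :
    qPoch (a*q) q m ≠ 0 := by
  refine Finset.prod_ne_zero_iff.mpr fun i _ => ?_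
  have h : a * q * q ^ i = a * q ^ ((i:ℤ) + 1) := by
    rw [show (i:ℤ)+1 = ((i+1 : ℕ) : ℤ) by push_cast; ring, zpow_natCast]; ring
  rw [h]
  exact haq _

lemma aqBinom_eq {a q : K} (hq1 : ∀ m : ℕ, q ^ (m + 1) ≠ 1)
    (haq : ∀ m : ℤ, 1 - a * q ^ m ≠ 0) (n j : ℕ) (hj : j ≤ n) :
    aqBinom a q n (j : ℤ) = qPoch q q n * qPoch (a*q) q n /
      (qPoch q q j * qPoch (a*q) q j * (qPoch q q (n-j) * qPoch (a*q) q (n-j))) *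
      q ^ ((j:ℤ) * ((j:ℤ) - (n:ℤ))) := by
  rw [aqBinom, if_neg (by omega)]
  have hjt : (j:ℤ).toNat = j := by omega
  rw [hjt]
  have hb : q ^ ((j:ℤ) + 1) = q * q ^ j := by
    rw [show (j:ℤ)+1 = ((j+1 : ℕ) : ℤ) by push_cast; ring, zpow_natCast]; ring
  have h1 : qPoch q q n = qPoch q q j * qPoch (q ^ ((j:ℤ)+1)) q (n-j) := by
    rw [hb, ← qPoch_add, Nat.add_sub_cancel' hj]
  have h2 : qPoch (a*q) q n = qPoch (a*q) q j * qPoch (a * q ^ ((j:ℤ)+1)) q (n-j) := by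
    rw [hb, show a * (q * q ^ j) = a * q * q ^ j by ring, ← qPoch_add, Nat.add_sub_cancel' hj]
  rw [h1, h2]
  have n1 := qPoch_q_ne hq1 j
  have n2 := qPoch_aq_ne haq j
  have n3 := qPoch_q_ne hq1 (n-j)
  have n4 := qPoch_aq_ne haq (n-j)
  field_simp

lemma aqBinom_zero {a q : K} (hq1 : ∀ m : ℕ, q ^ (m + 1) ≠ 1)
    (haq : ∀ m : ℤ, 1 - a * q ^ m ≠ 0) (n : ℕ) : aqBinom a q n (0:ℤ) = 1 := by
  have h := aqBinom_eq (a := a) hq1 haq n 0 (Nat.zero_le n)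
  rw [show ((0:ℕ):ℤ) = (0:ℤ) by norm_cast] at h
  rw [h]
  simp only [qPoch, Finset.range_zero, Finset.prod_empty, Nat.sub_zero, zero_mul, zpow_zero]
  simp only [one_mul, mul_one]
  exact div_self (mul_ne_zero (qPoch_q_ne hq1 n) (qPoch_aq_ne haq n))

lemma aqBinom_self {a q : K} (hq1 : ∀ m : ℕ, q ^ (m + 1) ≠ 1)
    (haq : ∀ m : ℤ, 1 - a * q ^ m ≠ 0) (n : ℕ) : aqBinom a q n (n:ℤ) = 1 := by
  rw [aqBinom_eq hq1 haq n n le_rfl]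
  simp only [qPoch, Nat.sub_self, Finset.range_zero, Finset.prod_empty, sub_self, mul_zero,
    zpow_zero]
  simp only [one_mul, mul_one]
  exact div_self (mul_ne_zero (qPoch_q_ne hq1 n) (qPoch_aq_ne haq n))

lemma key1 (a q t s u X1 X2 Y1 Y2 P A : K) (hq : q ≠ 0) (ht : t ≠ 0) (hs : s ≠ 0)
    (hu : u ≠ 0) (h1 : 1 - q*t ≠ 0) (h2 : 1 - a*q*t ≠ 0) (h3 : 1 - q*s ≠ 0)
    (h4 : 1 - a*q*s ≠ 0) (hX1 : X1 ≠ 0) (hX2 : X2 ≠ 0) (hY1 : Y1 ≠ 0) (hY2 : Y2 ≠ 0) :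
    P*(1 - q*(q*t*s)) * (A*(1 - a*(q*(q*t*s)))) /
        (X1*(1-q*t)*(X2*(1-a*q*t)) * (Y1*(1-q*s)*(Y2*(1-a*q*s)))) * (u*t*s*q)⁻¹
      = P*A/(X1*(1-q*t)*(X2*(1-a*q*t))*(Y1*Y2)) * (u*s)⁻¹
        + (1 - a*(t*s*s*q*q*q))/(1-a*(q*t)) * (s*q)⁻¹ *
          (P*A/(X1*X2*(Y1*(1-q*s)*(Y2*(1-a*q*s)))) * (u*t)⁻¹) := by
  have h2' : 1 - a*(q*t) ≠ 0 := by
    intro h; exact h2 (by linear_combination h)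
  simp only [← div_eq_mul_inv]
  simp only [div_div, div_mul_div_comm]
  rw [div_add_div _ _ (by apply_rules [mul_ne_zero]) (by apply_rules [mul_ne_zero]),
    div_eq_div_iff (by apply_rules [mul_ne_zero]) (by apply_rules [mul_ne_zero])]
  ring

lemma key2 (a q t s u X1 X2 Y1 Y2 P A : K) (hq : q ≠ 0) (ht : t ≠ 0) (hs : s ≠ 0)
    (hu : u ≠ 0) (h1 : 1 - q*t ≠ 0) (h2 : 1 - a*q*t ≠ 0) (h3 : 1 - q*s ≠ 0)
    (h4 : 1 - a*q*s ≠ 0) (hX1 : X1 ≠ 0) (hX2 : X2 ≠ 0) (hY1 : Y1 ≠ 0) (hY2 : Y2 ≠ 0) :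
    P*(1 - q*(q*t*s)) * (A*(1 - a*(q*(q*t*s)))) /
        (X1*(1-q*t)*(X2*(1-a*q*t)) * (Y1*(1-q*s)*(Y2*(1-a*q*s)))) * (u*t*s*q)⁻¹
      = (1 - a*(t*t*s*q*q*q))/(1 - a*(s*q)) * (t*q)⁻¹ *
          (P*A/(X1*(1-q*t)*(X2*(1-a*q*t))*(Y1*Y2)) * (u*s)⁻¹)
        + P*A/(X1*X2*(Y1*(1-q*s)*(Y2*(1-a*q*s)))) * (u*t)⁻¹ := by
  have h4' : 1 - a*(s*q) ≠ 0 := by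
    intro h; exact h4 (by linear_combination h)
  have h2' : 1 - a*(q*t) ≠ 0 := by
    intro h; exact h2 (by linear_combination h)
  simp only [← div_eq_mul_inv]
  simp only [div_div, div_mul_div_comm]
  rw [div_add_div _ _ (by apply_rules [mul_ne_zero]) (by apply_rules [mul_ne_zero]),
    div_eq_div_iff (by apply_rules [mul_ne_zero]) (by apply_rules [mul_ne_zero])]
  ring

end AqBinomAux

open AqBinomAux in
/-- The `(a;q)`-binomial coefficients are symmetric, `[n,k]_{a;q} = [n,n-k]_{a;q}` for
`0 ≤ k ≤ n`, and satisfy the two recurrences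
`[n+1,k] = [n,k] + [(1-aq^{2n+2-k})/(1-aq^k)]·q^{k-n-1}·[n,k-1]` and
`[n+1,k] = [(1-aq^{n+1+k})/(1-aq^{n+1-k})]·q^{-k}·[n,k] + [n,k-1]`. -/
theorem stmt13 {K : Type*} [Field K] (a q : K)
    (hq0 : q ≠ 0) (hq1 : ∀ m : ℕ, q ^ (m + 1) ≠ 1)
    (haq : ∀ m : ℤ, 1 - a * q ^ m ≠ 0) :
    (∀ (n : ℕ) (k : ℤ), 0 ≤ k → k ≤ (n : ℤ) →
      aqBinom a q n k = aqBinom a q n ((n : ℤ) - k)) ∧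
    (∀ (n : ℕ) (k : ℤ), aqBinom a q (n + 1) k =
      aqBinom a q n k +
        (1 - a * q ^ (2 * (n : ℤ) + 2 - k)) / (1 - a * q ^ k) * q ^ (k - (n : ℤ) - 1) *
          aqBinom a q n (k - 1)) ∧
    (∀ (n : ℕ) (k : ℤ), aqBinom a q (n + 1) k =
      (1 - a * q ^ ((n : ℤ) + 1 + k)) / (1 - a * q ^ ((n : ℤ) + 1 - k)) * q ^ (-k) *
          aqBinom a q n k + aqBinom a q n (k - 1)) := by
  have z : ∀ (N : ℕ) (kk : ℤ), (kk < 0 ∨ (N:ℤ) < kk) → aqBinom a q N kk = 0 :=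
    fun N kk h => by rw [aqBinom, if_pos h]
  have hself : ∀ n : ℕ, aqBinom a q (n+1) ((n:ℤ)+1) = 1 := by
    intro n
    have h := aqBinom_self hq1 haq (n+1)
    rwa [show ((n+1:ℕ):ℤ) = (n:ℤ)+1 by push_cast; ring] at h
  have hf1 : ∀ r : ℕ, (1:K) - q * q ^ r ≠ 0 := fun r h => hq1 r (by linear_combination -h)
  have hf2 : ∀ r : ℕ, (1:K) - a * q * q ^ r ≠ 0 := by
    intro r h
    have h' := haq ((r:ℤ)+1)
    rw [show ((r:ℤ)+1) = ((r+1:ℕ):ℤ) by push_cast; ring, zpow_natCast] at h'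
    exact h' (by linear_combination h)
  refine ⟨?_, ?_, ?_⟩
  · -- symmetry
    intro n k hk0 hkn
    obtain ⟨j, rfl⟩ : ∃ j : ℕ, k = (j:ℤ) := ⟨k.toNat, by omega⟩
    have hjn : j ≤ n := by omega
    rw [show (n:ℤ) - (j:ℤ) = ((n - j : ℕ) : ℤ) by omega]
    rw [aqBinom_eq hq1 haq n j hjn, aqBinom_eq hq1 haq n (n-j) (Nat.sub_le n j),
      Nat.sub_sub_self hjn]
    rw [show ((n-j:ℕ):ℤ) = (n:ℤ) - j by omega,
      show ((n:ℤ)-j) * (((n:ℤ)-j) - (n:ℤ)) = (j:ℤ)*((j:ℤ)-(n:ℤ)) by ring]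
    ring
  · -- recurrence 1
    intro n k
    by_cases hneg : k < 0
    · rw [z (n+1) k (Or.inl hneg), z n k (Or.inl hneg), z n (k-1) (Or.inl (by omega))]
      ring
    by_cases hbig : (n:ℤ)+1 < k
    · rw [z (n+1) k (Or.inr (by push_cast; omega)), z n k (Or.inr (by omega)),
        z n (k-1) (Or.inr (by omega))]
      ring
    by_cases hzero : k = 0
    · subst hzero
      rw [z n (0-1) (Or.inl (by norm_num)), aqBinom_zero hq1 haq (n+1),
        aqBinom_zero hq1 haq n]
      ring
    by_cases htop : k = (n:ℤ)+1
    · subst htop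
      rw [hself n, z n ((n:ℤ)+1) (Or.inr (by omega)),
        show ((n:ℤ)+1-1) = ((n:ℕ):ℤ) by ring, aqBinom_self hq1 haq n,
        show 2*(n:ℤ)+2-((n:ℤ)+1) = (n:ℤ)+1 by ring,
        show (n:ℤ)+1-(n:ℤ)-1 = 0 by ring, zpow_zero, div_self (haq ((n:ℤ)+1))]
      ring
    -- main case
    obtain ⟨i, rfl⟩ : ∃ i : ℕ, k = ((i+1:ℕ):ℤ) := ⟨(k-1).toNat, by omega⟩
    obtain ⟨m, rfl⟩ : ∃ m : ℕ, n = i+1+m := ⟨n-(i+1), by omega⟩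
    rw [show ((i+1:ℕ):ℤ) - 1 = ((i:ℕ):ℤ) by push_cast; ring]
    rw [aqBinom_eq hq1 haq (i+1+m+1) (i+1) (by omega),
        aqBinom_eq hq1 haq (i+1+m) (i+1) (by omega),
        aqBinom_eq hq1 haq (i+1+m) i (by omega)]
    rw [show i+1+m+1-(i+1) = m+1 by omega, show i+1+m-(i+1) = m by omega,
        show i+1+m-i = m+1 by omega]
    simp only [qPoch_succ]
    push_cast
    rw [show ((i:ℤ) + 1) * ((i:ℤ) + 1 - ((i:ℤ) + 1 + (m:ℤ) + 1)) = -(((i+1)*(m+1):ℕ):ℤ) by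
          push_cast; ring,
        show ((i:ℤ) + 1) * ((i:ℤ) + 1 - ((i:ℤ) + 1 + (m:ℤ))) = -(((i+1)*m:ℕ):ℤ) by
          push_cast; ring,
        show 2 * ((i:ℤ) + 1 + (m:ℤ)) + 2 - ((i:ℤ) + 1) = ((i+2*m+3:ℕ):ℤ) by push_cast; ring,
        show (i:ℤ) + 1 - ((i:ℤ) + 1 + (m:ℤ)) - 1 = -(((m+1):ℕ):ℤ) by push_cast; ring,
        show (i:ℤ) * ((i:ℤ) - ((i:ℤ) + 1 + (m:ℤ))) = -((i*(m+1):ℕ):ℤ) by push_cast; ring,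
        show ((i:ℤ) + 1) = ((i+1:ℕ):ℤ) by push_cast; ring]
    simp only [zpow_neg, zpow_natCast]
    have n1 := qPoch_q_ne hq1 i
    have n2 := qPoch_aq_ne haq i
    have n3 := qPoch_q_ne hq1 m
    have n4 := qPoch_aq_ne haq m
    have H := key1 a q (q^i) (q^m) (q^(i*m)) (qPoch q q i) (qPoch (a*q) q i)
      (qPoch q q m) (qPoch (a*q) q m) (qPoch q q (i+1+m)) (qPoch (a*q) q (i+1+m))
      hq0 (pow_ne_zero _ hq0) (pow_ne_zero _ hq0) (pow_ne_zero _ hq0)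
      (hf1 i) (hf2 i) (hf1 m) (hf2 m) n1 n2 n3 n4
    linear_combination H
  · -- recurrence 2
    intro n k
    by_cases hneg : k < 0
    · rw [z (n+1) k (Or.inl hneg), z n k (Or.inl hneg), z n (k-1) (Or.inl (by omega))]
      ring
    by_cases hbig : (n:ℤ)+1 < k
    · rw [z (n+1) k (Or.inr (by push_cast; omega)), z n k (Or.inr (by omega)),
        z n (k-1) (Or.inr (by omega))]
      ring
    by_cases hzero : k = 0
    · subst hzero
      rw [z n (0-1) (Or.inl (by norm_num)), aqBinom_zero hq1 haq (n+1),
        aqBinom_zero hq1 haq n,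
        show (n:ℤ)+1+(0:ℤ) = (n:ℤ)+1-(0:ℤ) by ring, div_self (haq ((n:ℤ)+1-(0:ℤ)))]
      norm_num
    by_cases htop : k = (n:ℤ)+1
    · subst htop
      rw [hself n, z n ((n:ℤ)+1) (Or.inr (by omega)),
        show ((n:ℤ)+1-1) = ((n:ℕ):ℤ) by ring, aqBinom_self hq1 haq n]
      ring
    -- main case
    obtain ⟨i, rfl⟩ : ∃ i : ℕ, k = ((i+1:ℕ):ℤ) := ⟨(k-1).toNat, by omega⟩
    obtain ⟨m, rfl⟩ : ∃ m : ℕ, n = i+1+m := ⟨n-(i+1), by omega⟩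
    rw [show ((i+1:ℕ):ℤ) - 1 = ((i:ℕ):ℤ) by push_cast; ring]
    rw [aqBinom_eq hq1 haq (i+1+m+1) (i+1) (by omega),
        aqBinom_eq hq1 haq (i+1+m) (i+1) (by omega),
        aqBinom_eq hq1 haq (i+1+m) i (by omega)]
    rw [show i+1+m+1-(i+1) = m+1 by omega, show i+1+m-(i+1) = m by omega,
        show i+1+m-i = m+1 by omega]
    simp only [qPoch_succ]
    push_cast
    rw [show ((i:ℤ) + 1) * ((i:ℤ) + 1 - ((i:ℤ) + 1 + (m:ℤ) + 1)) = -(((i+1)*(m+1):ℕ):ℤ) by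
          push_cast; ring,
        show ((i:ℤ) + 1) * ((i:ℤ) + 1 - ((i:ℤ) + 1 + (m:ℤ))) = -(((i+1)*m:ℕ):ℤ) by
          push_cast; ring,
        show (i:ℤ) * ((i:ℤ) - ((i:ℤ) + 1 + (m:ℤ))) = -((i*(m+1):ℕ):ℤ) by push_cast; ring,
        show (i:ℤ) + 1 + (m:ℤ) + 1 + ((i:ℤ) + 1) = ((2*i+m+3:ℕ):ℤ) by push_cast; ring,
        show (i:ℤ) + 1 + (m:ℤ) + 1 - ((i:ℤ) + 1) = ((m+1:ℕ):ℤ) by push_cast; ring,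
        show -((i:ℤ) + 1) = -(((i+1:ℕ):ℤ)) by push_cast; ring]
    simp only [zpow_neg, zpow_natCast]
    have n1 := qPoch_q_ne hq1 i
    have n2 := qPoch_aq_ne haq i
    have n3 := qPoch_q_ne hq1 m
    have n4 := qPoch_aq_ne haq m
    have H := key2 a q (q^i) (q^m) (q^(i*m)) (qPoch q q i) (qPoch (a*q) q i)
      (qPoch q q m) (qPoch (a*q) q m) (qPoch q q (i+1+m)) (qPoch (a*q) q (i+1+m))
      hq0 (pow_ne_zero _ hq0) (pow_ne_zero _ hq0) (pow_ne_zero _ hq0)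
      (hf1 i) (hf2 i) (hf1 m) (hf2 m) n1 n2 n3 n4
    linear_combination H
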